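/- For a bipartite pure state |ψ⟩ ∈ H_1 ⊗ H_2, E_{k_1,k_2}(|ψ⟩) equals the sum of the min(k_1,k_2) largest eigenvalues of the reduced density matrix ρ_1 = tr_2 |ψ⟩⟨ψ|; in particular E_{k_1,k_2} = E_{k_2,k_1}. -/

import Mathlib

open scoped ComplexOrder Matrix

noncomputable def sortedDesc {d : ℕ} (v : Fin d → ℝ) : Fin d → ℝ :=
  fun i => (v ∘ Tuple.sort v) (Fin.rev i)

def psum {d : ℕ} (v : Fin d → ℝ) (k : ℕ) : ℝ :=
  ∑ i : Fin d, if (i : ℕ) < k then v i else 0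

def IsProjOfRank {ι : Type*} [Fintype ι] [DecidableEq ι]
    (P : Matrix ι ι ℂ) (k : ℕ) : Prop :=
  P.IsHermitian ∧ P * P = P ∧ P.rank = k

/-- The bipartite monotone E_{k₁,k₂}: a bipartite pure vector ψ ∈ H₁ ⊗ H₂ is
represented by its coefficient matrix M, so that (P ⊗ Q)ψ has matrix P * M * Qᵀ. -/
noncomputable def Ebi {m n : Type*} [Fintype m] [DecidableEq m] [Fintype n] [DecidableEq n]
    (k₁ k₂ : ℕ) (M : Matrix m n ℂ) : ℝ :=
  sSup {x | ∃ (P : Matrix m m ℂ) (Q : Matrix n n ℂ),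
    IsProjOfRank P k₁ ∧ IsProjOfRank Q k₂ ∧
    x = ∑ i, ∑ j, Complex.normSq ((P * M * Qᵀ) i j)}

/-!
With ψ encoded by its coefficient matrix `M`, `‖(P ⊗ Q)ψ‖²` is the squared Frobenius norm of
`P M Qᵀ` and `ρ₁ = M Mᴴ`. Upper bound: the orthogonal projection `E` onto the range of
`X = P M Qᵀ` lies below `P` and has rank at most `min k₁ k₂`, so
`‖X‖² = ‖E M Qᵀ‖² ≤ ‖E M‖² = tr (ρ₁ E)`, which Ky Fan's maximum principle bounds by the sum of the
`min k₁ k₂` largest eigenvalues of `ρ₁`. Lower bound: let `P₀` be the spectral projection of `ρ₁`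
onto its top `k = min k₁ k₂` eigenvectors and `E` the range projection of `Mᴴ P₀`, of rank at most
`k`; enlarging `P₀` and `E` to projections `P`, `R` of ranks `k₁`, `k₂` gives
`‖P M R‖² ≥ ‖P₀ M E‖² = ‖P₀ M‖² = tr (ρ₁ P₀)`.
-/

open Matrix Unitary

section StarProjection

variable {n : Type*} [Fintype n] [DecidableEq n]

lemma trace_conjStarAlgAut (U : unitary (Matrix n n ℂ)) (A : Matrix n n ℂ) :
    (conjStarAlgAut ℂ _ U A).trace = A.trace := by
  rw [conjStarAlgAut_apply, trace_mul_cycle, coe_star_mul_self, one_mul]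

lemma rank_conjStarAlgAut (U : unitary (Matrix n n ℂ)) (A : Matrix n n ℂ) :
    (conjStarAlgAut ℂ _ U A).rank = A.rank := by
  rw [conjStarAlgAut_apply, ← coe_star]
  simp [-isUnit_iff_ne_zero, -coe_star]

/-- The orthogonal projection onto the span of the columns of `U` indexed by `S`. -/
noncomputable def diagProj (U : unitary (Matrix n n ℂ)) (S : Finset n) : Matrix n n ℂ :=
  conjStarAlgAut ℂ _ U (diagonal fun i => if i ∈ S then 1 else 0)

variable (U : unitary (Matrix n n ℂ)) (S T : Finset n)

lemma isStarProjection_diagProj : IsStarProjection (diagProj U S) := by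
  refine IsStarProjection.map ⟨?_, ?_⟩ _
  · simp [IsIdempotentElem, diagonal_mul_diagonal]
  · simp [IsSelfAdjoint, star_eq_conjTranspose, diagonal_conjTranspose]

lemma diagProj_mul_diagProj : diagProj U S * diagProj U T = diagProj U (S ∩ T) := by
  simp only [diagProj, ← map_mul, diagonal_mul_diagonal, Finset.mem_inter]
  congr; ext i; split_ifs <;> simp_all

lemma rank_diagProj : (diagProj U S).rank = S.card := by
  rw [diagProj, rank_conjStarAlgAut, rank_diagonal, Fintype.card_subtype]
  simp

lemma trace_diagProj : (diagProj U S).trace = S.card := by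
  rw [diagProj, trace_conjStarAlgAut, trace_diagonal]
  simp

lemma re_trace_mul_diagProj {A : Matrix n n ℂ} {v : n → ℝ}
    (hA : A = conjStarAlgAut ℂ _ U (diagonal (RCLike.ofReal ∘ v))) :
    (A * diagProj U S).trace.re = ∑ i ∈ S, v i := by
  rw [hA, diagProj, ← map_mul, trace_conjStarAlgAut, diagonal_mul_diagonal, trace_diagonal]
  simp [Finset.sum_ite_mem]

end StarProjection

lemma IsStarProjection.mul_eq_left_of_mul_eq_right {R : Type*} [Mul R] [StarMul R] {p q : R}
    (hp : IsStarProjection p) (hq : IsStarProjection q) (h : q * p = p) : p * q = p := by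
  rw [← hp.isSelfAdjoint.star_eq, ← hq.isSelfAdjoint.star_eq, ← star_mul, h]

namespace IsStarProjection

variable {n : Type*} [Fintype n] {P : Matrix n n ℂ}

lemma transpose (hP : IsStarProjection P) : IsStarProjection Pᵀ where
  isIdempotentElem := by rw [IsIdempotentElem, ← transpose_mul, hP.isIdempotentElem.eq]
  isSelfAdjoint := by
    rw [IsSelfAdjoint, star_eq_conjTranspose, conjTranspose_transpose_eq_transpose_conjTranspose,
      ← star_eq_conjTranspose, hP.isSelfAdjoint.star_eq]

lemma re_diag_mem_Icc (hP : IsStarProjection P) (i : n) : (P i i).re ∈ Set.Icc 0 1 := by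
  have hii : P i i = ∑ l, (Complex.normSq (P i l) : ℂ) := by
    calc P i i = (P * star P) i i := by rw [hP.isSelfAdjoint.star_eq, hP.isIdempotentElem.eq]
      _ = _ := by simp [mul_apply, Complex.mul_conj]
  have hre : (P i i).re = ∑ l, Complex.normSq (P i l) := by simp [hii, Complex.re_sum]
  have hle : Complex.normSq (P i i) ≤ (P i i).re :=
    hre ▸ Finset.single_le_sum (fun l _ => Complex.normSq_nonneg (P i l)) (Finset.mem_univ i)
  have hsq : (P i i).re ^ 2 ≤ Complex.normSq (P i i) := by
    rw [Complex.normSq_apply]; nlinarith [sq_nonneg (P i i).im]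
  constructor <;> nlinarith [Complex.normSq_nonneg (P i i)]

variable [DecidableEq n]

lemma eigenvalues_eq_zero_or_one (hP : IsStarProjection P) (i : n) :
    hP.isSelfAdjoint.isHermitian.eigenvalues i = 0 ∨
      hP.isSelfAdjoint.isHermitian.eigenvalues i = 1 :=
  hP.isIdempotentElem.spectrum_subset ℝ
    (hP.isSelfAdjoint.isHermitian.eigenvalues_mem_spectrum_real i)

lemma eq_diagProj (hP : IsStarProjection P) :
    P = diagProj hP.isSelfAdjoint.isHermitian.eigenvectorUnitary
      {i | hP.isSelfAdjoint.isHermitian.eigenvalues i ≠ 0} := by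
  conv_lhs => rw [hP.isSelfAdjoint.isHermitian.spectral_theorem]
  rw [diagProj]
  congr; ext i
  rcases hP.eigenvalues_eq_zero_or_one i with h | h <;> simp [h]

lemma re_trace_eq_rank (hP : IsStarProjection P) : P.trace.re = P.rank := by
  rw [hP.eq_diagProj, trace_diagProj, rank_diagProj]
  simp

lemma exists_rank_eq_mul_eq (hP : IsStarProjection P) {k : ℕ} (hPk : P.rank ≤ k)
    (hk : k ≤ Fintype.card n) :
    ∃ R : Matrix n n ℂ, IsStarProjection R ∧ R.rank = k ∧ R * P = P := by
  rw [hP.eq_diagProj] at hPk ⊢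
  rw [rank_diagProj] at hPk
  obtain ⟨T, hST, -, hT⟩ := Finset.exists_subsuperset_card_eq (Finset.subset_univ _) hPk hk
  refine ⟨diagProj hP.isSelfAdjoint.isHermitian.eigenvectorUnitary T,
    isStarProjection_diagProj _ _, rank_diagProj _ _ |>.trans hT, ?_⟩
  rw [diagProj_mul_diagProj, Finset.inter_eq_right.mpr hST]

end IsStarProjection

section Frobenius

variable {m n : Type*} [Fintype m] [Fintype n]

def frobeniusNormSq (A : Matrix m n ℂ) : ℝ := ∑ i, ∑ j, Complex.normSq (A i j)

lemma frobeniusNormSq_eq_re_trace (A : Matrix m n ℂ) :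
    frobeniusNormSq A = (A * Aᴴ).trace.re := by
  simp [frobeniusNormSq, trace, mul_apply, Complex.mul_conj, Complex.re_sum]

lemma frobeniusNormSq_nonneg (A : Matrix m n ℂ) : 0 ≤ frobeniusNormSq A :=
  Finset.sum_nonneg fun _ _ => Finset.sum_nonneg fun _ _ => Complex.normSq_nonneg _

lemma frobeniusNormSq_conjTranspose (A : Matrix m n ℂ) :
    frobeniusNormSq Aᴴ = frobeniusNormSq A := by
  rw [frobeniusNormSq_eq_re_trace, frobeniusNormSq_eq_re_trace, conjTranspose_conjTranspose,
    trace_mul_comm]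

lemma frobeniusNormSq_proj_mul {P : Matrix m m ℂ} (hP : IsStarProjection P) (A : Matrix m n ℂ) :
    frobeniusNormSq (P * A) = (A * Aᴴ * P).trace.re := by
  rw [frobeniusNormSq_eq_re_trace, conjTranspose_mul, hP.isSelfAdjoint.isHermitian.eq,
    Matrix.mul_assoc, trace_mul_comm, Matrix.mul_assoc, Matrix.mul_assoc, hP.isIdempotentElem.eq]
  simp only [Matrix.mul_assoc]

lemma frobeniusNormSq_proj_mul_le [DecidableEq m] {P : Matrix m m ℂ} (hP : IsStarProjection P)
    (A : Matrix m n ℂ) : frobeniusNormSq (P * A) ≤ frobeniusNormSq A := by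
  have hsplit : frobeniusNormSq (P * A) + frobeniusNormSq ((1 - P) * A) = frobeniusNormSq A := by
    rw [frobeniusNormSq_proj_mul hP, frobeniusNormSq_proj_mul hP.one_sub, ← Complex.add_re,
      ← trace_add, ← Matrix.mul_add, add_sub_cancel, Matrix.mul_one, frobeniusNormSq_eq_re_trace]
  linarith [frobeniusNormSq_nonneg ((1 - P) * A)]

lemma frobeniusNormSq_mul_proj_le [DecidableEq n] {P : Matrix n n ℂ} (hP : IsStarProjection P)
    (A : Matrix m n ℂ) : frobeniusNormSq (A * P) ≤ frobeniusNormSq A := by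
  rw [← frobeniusNormSq_conjTranspose, conjTranspose_mul, ← star_eq_conjTranspose P,
    hP.isSelfAdjoint.star_eq, ← frobeniusNormSq_conjTranspose A]
  exact frobeniusNormSq_proj_mul_le hP Aᴴ

end Frobenius

lemma exists_range_starProjection {m n : Type*} [Fintype m] [DecidableEq m] [Fintype n]
    (X : Matrix m n ℂ) :
    ∃ E : Matrix m m ℂ, IsStarProjection E ∧ E * X = X ∧ ∃ Z : Matrix n m ℂ, E = X * Z := by
  -- `E = f (X Xᴴ)` for `f x = x * x⁻¹`, the indicator of `x ≠ 0` because `0⁻¹ = 0`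
  set A := X * Xᴴ
  have hA : IsSelfAdjoint A := (isHermitian_mul_conjTranspose_self X).isSelfAdjoint
  have hc (f : ℝ → ℝ) : ContinuousOn f (spectrum ℝ A) := A.finite_real_spectrum.continuousOn f
  have hEA : cfc (fun x : ℝ => x * x⁻¹) A * A = A := by
    calc _ = cfc (fun x : ℝ => x * x⁻¹) A * cfc (fun x => x) A := by rw [cfc_id' ℝ A hA]
      _ = cfc (fun x : ℝ => x * x⁻¹ * x) A := (cfc_mul _ _ A (hc _) (hc _)).symm
      _ = A := by simp only [mul_inv_mul_cancel]; exact cfc_id' ℝ A hA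
  refine ⟨cfc (fun x : ℝ => x * x⁻¹) A, ⟨?_, cfc_predicate _ A⟩, ?_,
    Xᴴ * cfc (fun x : ℝ => x⁻¹) A, ?_⟩
  · rw [IsIdempotentElem, ← cfc_mul _ _ A (hc _) (hc _)]
    congr; ext x; by_cases hx : x = 0 <;> simp [hx]
  · have h : (1 - cfc (fun x : ℝ => x * x⁻¹) A) * (X * Xᴴ) = 0 := by
      rw [Matrix.sub_mul, hEA, Matrix.one_mul, sub_self]
    rw [mul_self_mul_conjTranspose_eq_zero, Matrix.sub_mul, Matrix.one_mul, sub_eq_zero] at h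
    exact h.symm
  · rw [← Matrix.mul_assoc, cfc_mul _ _ A (hc _) (hc _), cfc_id' ℝ A hA]

section KyFan

variable {d : ℕ}

lemma antitone_sortedDesc (v : Fin d → ℝ) : Antitone (sortedDesc v) :=
  fun _ _ hij => Tuple.monotone_sort v (Fin.rev_le_rev.mpr hij)

lemma exists_perm_sortedDesc_eq (v : Fin d → ℝ) :
    ∃ σ : Equiv.Perm (Fin d), sortedDesc v = v ∘ σ :=
  ⟨Fin.revPerm.trans (Tuple.sort v), rfl⟩

lemma sum_mul_le_psum_of_antitone {w t : Fin d → ℝ} (hw : Antitone w) (hw0 : ∀ i, 0 ≤ w i)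
    (ht : ∀ i, t i ∈ Set.Icc 0 1) {r : ℕ} (hr : ∑ i, t i ≤ r) : ∑ i, w i * t i ≤ psum w r := by
  rcases le_or_gt d r with hdr | hrd
  · have hpsum : psum w r = ∑ i, w i :=
      Finset.sum_congr rfl fun i _ => if_pos (i.2.trans_le hdr)
    rw [hpsum]
    exact Finset.sum_le_sum fun i _ => mul_le_of_le_one_right (hw0 i) (ht i).2
  set c := w ⟨r, hrd⟩
  have hterm (i : Fin d) : w i * t i ≤
      (if (i : ℕ) < r then w i else 0) + c * (t i - if (i : ℕ) < r then 1 else 0) := by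
    obtain ⟨h0, h1⟩ := ht i
    split_ifs with hi
    · have : c ≤ w i := hw (Fin.le_def.mpr hi.le)
      nlinarith
    · have : w i ≤ c := hw (Fin.le_def.mpr (not_lt.mp hi))
      nlinarith
  have hcount : ∑ i : Fin d, (if (i : ℕ) < r then (1 : ℝ) else 0) = r := by
    rw [Finset.sum_boole, Fin.card_filter_val_lt, min_eq_right hrd.le]
  calc ∑ i, w i * t i
      ≤ ∑ i : Fin d,
          ((if (i : ℕ) < r then w i else 0) + c * (t i - if (i : ℕ) < r then 1 else 0)) :=
        Finset.sum_le_sum fun i _ => hterm i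
    _ = psum w r + c * (∑ i, t i - r) := by
        rw [Finset.sum_add_distrib, ← Finset.mul_sum, Finset.sum_sub_distrib, hcount, psum]
    _ ≤ psum w r := by nlinarith [hw0 ⟨r, hrd⟩]

lemma sum_mul_le_psum_sortedDesc {v t : Fin d → ℝ} (hv : ∀ i, 0 ≤ v i)
    (ht : ∀ i, t i ∈ Set.Icc 0 1) {r : ℕ} (hr : ∑ i, t i ≤ r) :
    ∑ i, v i * t i ≤ psum (sortedDesc v) r := by
  obtain ⟨σ, hσ⟩ := exists_perm_sortedDesc_eq v
  rw [← Equiv.sum_comp σ, hσ]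
  have hanti : Antitone (v ∘ σ) := hσ ▸ antitone_sortedDesc v
  exact sum_mul_le_psum_of_antitone hanti (fun _ => hv _) (fun _ => ht _)
    (by rwa [Equiv.sum_comp σ t])

lemma re_trace_mul_le_psum {ρ P : Matrix (Fin d) (Fin d) ℂ} (hρ : ρ.PosSemidef)
    (hP : IsStarProjection P) {r : ℕ} (hr : P.rank ≤ r) :
    (ρ * P).trace.re ≤ psum (sortedDesc hρ.1.eigenvalues) r := by
  set U := hρ.1.eigenvectorUnitary
  set C := conjStarAlgAut ℂ _ (star U) P
  have hC : IsStarProjection C := hP.map _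
  have htrace : (ρ * P).trace.re = ∑ i, hρ.1.eigenvalues i * (C i i).re := by
    rw [← trace_conjStarAlgAut (star U), map_mul, hρ.1.conjStarAlgAut_star_eigenvectorUnitary]
    simp [C, trace, diagonal_mul, Complex.re_sum]
  have hsum : ∑ i, (C i i).re ≤ r := by
    rw [← Complex.re_sum]
    change C.trace.re ≤ r
    rw [trace_conjStarAlgAut, hP.re_trace_eq_rank]
    exact_mod_cast hr
  rw [htrace]
  exact sum_mul_le_psum_sortedDesc hρ.eigenvalues_nonneg hC.re_diag_mem_Icc hsum

lemma exists_re_trace_mul_eq_psum {ρ : Matrix (Fin d) (Fin d) ℂ} (hρ : ρ.IsHermitian) {k : ℕ}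
    (hk : k ≤ d) : ∃ P : Matrix (Fin d) (Fin d) ℂ, IsStarProjection P ∧ P.rank = k ∧
      (ρ * P).trace.re = psum (sortedDesc hρ.eigenvalues) k := by
  obtain ⟨σ, hσ⟩ := exists_perm_sortedDesc_eq hρ.eigenvalues
  set S := ({i | (i : ℕ) < k} : Finset (Fin d)).map σ.toEmbedding
  refine ⟨diagProj hρ.eigenvectorUnitary S, isStarProjection_diagProj _ _, ?_, ?_⟩
  · rw [rank_diagProj, Finset.card_map, Fin.card_filter_val_lt, min_eq_right hk]
  · rw [re_trace_mul_diagProj _ _ hρ.spectral_theorem, Finset.sum_map, psum, hσ,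
      ← Finset.sum_filter]
    rfl

end KyFan

lemma isProjOfRank_iff {ι : Type*} [Fintype ι] [DecidableEq ι] {P : Matrix ι ι ℂ} {k : ℕ} :
    IsProjOfRank P k ↔ IsStarProjection P ∧ P.rank = k :=
  ⟨fun ⟨hH, hI, hk⟩ => ⟨⟨hI, hH.isSelfAdjoint⟩, hk⟩,
    fun ⟨hP, hk⟩ => ⟨hP.isSelfAdjoint.isHermitian, hP.isIdempotentElem, hk⟩⟩

variable {d₁ d₂ : ℕ} (M : Matrix (Fin d₁) (Fin d₂) ℂ)

lemma frobeniusNormSq_le_psum {P : Matrix (Fin d₁) (Fin d₁) ℂ} {R : Matrix (Fin d₂) (Fin d₂) ℂ}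
    (hP : IsStarProjection P) (hR : IsStarProjection R) :
    frobeniusNormSq (P * M * R) ≤ psum (sortedDesc (posSemidef_self_mul_conjTranspose M).1.eigenvalues)
      (min P.rank R.rank) := by
  obtain ⟨E, hE, hEX, Z, hEZ⟩ := exists_range_starProjection (P * M * R)
  have hPE : P * E = E := by simp only [hEZ, ← Matrix.mul_assoc, hP.isIdempotentElem.eq]
  have hEP : E * P = E := hE.mul_eq_left_of_mul_eq_right hP hPE
  have hErank : E.rank ≤ min P.rank R.rank := hEZ ▸ (rank_mul_le_left _ _).trans
    (le_min ((rank_mul_le_left _ _).trans (rank_mul_le_left _ _)) (rank_mul_le_right _ _))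
  calc frobeniusNormSq (P * M * R)
      = frobeniusNormSq (E * M * R) := by
        rw [← hEX, ← Matrix.mul_assoc, ← Matrix.mul_assoc, hEP]
    _ ≤ frobeniusNormSq (E * M) := frobeniusNormSq_mul_proj_le hR _
    _ = (M * Mᴴ * E).trace.re := frobeniusNormSq_proj_mul hE M
    _ ≤ _ := re_trace_mul_le_psum (posSemidef_self_mul_conjTranspose M) hE hErank

lemma exists_psum_le_frobeniusNormSq {k₁ k₂ : ℕ} (hk₁ : k₁ ≤ d₁) (hk₂ : k₂ ≤ d₂) :
    ∃ (P : Matrix (Fin d₁) (Fin d₁) ℂ) (R : Matrix (Fin d₂) (Fin d₂) ℂ),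
      IsStarProjection P ∧ P.rank = k₁ ∧ IsStarProjection R ∧ R.rank = k₂ ∧
      psum (sortedDesc (posSemidef_self_mul_conjTranspose M).1.eigenvalues) (min k₁ k₂) ≤
        frobeniusNormSq (P * M * R) := by
  obtain ⟨P₀, hP₀, hP₀k, htr⟩ :=
    exists_re_trace_mul_eq_psum (posSemidef_self_mul_conjTranspose M).1
      ((min_le_left _ _).trans hk₁)
  obtain ⟨E, hE, hEX, Z, hEZ⟩ := exists_range_starProjection (Mᴴ * P₀)
  have hErank : E.rank ≤ min k₁ k₂ :=
    hEZ ▸ (rank_mul_le_left _ _).trans ((rank_mul_le_right _ _).trans hP₀k.le)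
  obtain ⟨P, hP, hPk, hPP₀⟩ :=
    hP₀.exists_rank_eq_mul_eq (hP₀k.trans_le (min_le_left _ _)) (by simpa using hk₁)
  obtain ⟨R, hR, hRk, hRE⟩ :=
    hE.exists_rank_eq_mul_eq (hErank.trans (min_le_right _ _)) (by simpa using hk₂)
  have hP₀P : P₀ * P = P₀ := hP₀.mul_eq_left_of_mul_eq_right hP hPP₀
  have hP₀ME : P₀ * M * E = P₀ * M := by
    simpa [conjTranspose_mul, hE.isSelfAdjoint.isHermitian.eq, hP₀.isSelfAdjoint.isHermitian.eq,
      Matrix.mul_assoc] using congrArg conjTranspose hEX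
  refine ⟨P, R, hP, hPk, hR, hRk, ?_⟩
  calc _ = (M * Mᴴ * P₀).trace.re := htr.symm
    _ = frobeniusNormSq (P₀ * M) := (frobeniusNormSq_proj_mul hP₀ M).symm
    _ = frobeniusNormSq (P₀ * (P * M * R) * E) := by
        simp only [← Matrix.mul_assoc, hP₀P]
        rw [Matrix.mul_assoc _ R E, hRE, hP₀ME]
    _ ≤ frobeniusNormSq (P₀ * (P * M * R)) := frobeniusNormSq_mul_proj_le hE _
    _ ≤ frobeniusNormSq (P * M * R) := frobeniusNormSq_proj_mul_le hP₀ _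

lemma Ebi_eq_psum {k₁ k₂ : ℕ} (hk₁ : k₁ ≤ d₁) (hk₂ : k₂ ≤ d₂) :
    Ebi k₁ k₂ M =
      psum (sortedDesc (posSemidef_self_mul_conjTranspose M).1.eigenvalues) (min k₁ k₂) := by
  obtain ⟨P, R, hP, hPk, hR, hRk, hle⟩ := exists_psum_le_frobeniusNormSq M hk₁ hk₂
  have hPk' : IsProjOfRank P k₁ := isProjOfRank_iff.mpr ⟨hP, hPk⟩
  have hRk' : IsProjOfRank Rᵀ k₂ :=
    isProjOfRank_iff.mpr ⟨hR.transpose, (rank_transpose R).trans hRk⟩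
  refine csSup_eq_of_forall_le_of_forall_lt_exists_gt ⟨_, P, Rᵀ, hPk', hRk', rfl⟩ ?_
    fun w hw => ⟨_, ⟨P, Rᵀ, hPk', hRk', rfl⟩, hw.trans_le hle⟩
  rintro x ⟨P', Q, hP', hQ, rfl⟩
  rw [isProjOfRank_iff] at hP' hQ
  have := frobeniusNormSq_le_psum M hP'.1 hQ.1.transpose
  rwa [rank_transpose, hP'.2, hQ.2] at this

theorem Ebi_eq_sum_largest_eigenvalues_general
    {d₁ d₂ : ℕ} (M : Matrix (Fin d₁) (Fin d₂) ℂ)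
    (k₁ k₂ : ℕ) (hk₁d : k₁ ≤ d₁) (hk₂d : k₂ ≤ d₂) :
    Ebi k₁ k₂ M =
      psum (sortedDesc (Matrix.posSemidef_self_mul_conjTranspose M).1.eigenvalues)
        (min k₁ k₂) ∧
    (k₂ ≤ d₁ → k₁ ≤ d₂ → Ebi k₁ k₂ M = Ebi k₂ k₁ M) :=
  ⟨Ebi_eq_psum M hk₁d hk₂d, fun hk₂d₁ hk₁d₂ => by
    rw [Ebi_eq_psum M hk₁d hk₂d, Ebi_eq_psum M hk₂d₁ hk₁d₂, min_comm]⟩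

/-- for a bipartite pure state with coefficient matrix M (so that the
reduced density matrix is ρ₁ = M Mᴴ), E_{k₁,k₂} equals the sum of the min(k₁,k₂)
largest eigenvalues of ρ₁; in particular E_{k₁,k₂} = E_{k₂,k₁}. -/
theorem Ebi_eq_sum_largest_eigenvalues
    {d₁ d₂ : ℕ} (M : Matrix (Fin d₁) (Fin d₂) ℂ)
    (k₁ k₂ : ℕ) (hk₁ : 1 ≤ k₁) (hk₁d : k₁ ≤ d₁) (hk₂ : 1 ≤ k₂) (hk₂d : k₂ ≤ d₂) :
    Ebi k₁ k₂ M =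
      psum (sortedDesc (Matrix.posSemidef_self_mul_conjTranspose M).1.eigenvalues)
        (min k₁ k₂) ∧
    (k₂ ≤ d₁ → k₁ ≤ d₂ → Ebi k₁ k₂ M = Ebi k₂ k₁ M) :=
  Ebi_eq_sum_largest_eigenvalues_general M k₁ k₂ hk₁d hk₂d
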